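/- arXiv:2602.10680 — 4 statements merged into one kernel-verified Lean document; each statement's English description precedes it below -/
import Mathlib

section
/- Let Σ be a symmetric positive semidefinite d×d matrix and define L(w) = Tr(Σ) - (2/d)wᵀΣw + (‖w‖²/d²)wᵀΣw. Any global minimizer ŵ of L with ŵᵀΣŵ > 0 satisfies ‖ŵ‖² = d, and ŵ/√d is a leading eigenvector of Σ (it maximizes the Rayleigh quotient vᵀΣv over unit vectors v). -/
open Matrix

lemma quad_smul {d : ℕ} (A : Matrix (Fin d) (Fin d) ℝ) (c : ℝ) (x : Fin d → ℝ) :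
    (c • x) ⬝ᵥ A.mulVec (c • x) = c ^ 2 * (x ⬝ᵥ A.mulVec x) := by
  rw [Matrix.mulVec_smul, smul_dotProduct, dotProduct_smul, smul_eq_mul, smul_eq_mul]
  ring

lemma dot_smul_self {d : ℕ} (c : ℝ) (x : Fin d → ℝ) :
    (c • x) ⬝ᵥ (c • x) = c ^ 2 * (x ⬝ᵥ x) := by
  rw [smul_dotProduct, dotProduct_smul, smul_eq_mul, smul_eq_mul]
  ring

lemma dot_self_nonneg {d : ℕ} (x : Fin d → ℝ) : 0 ≤ x ⬝ᵥ x :=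
  Finset.sum_nonneg fun i _ => mul_self_nonneg _

/-- Any global minimizer `wh` of the linear-autoencoder loss
`L(w) = Tr Σ - (2/d) wᵀΣw + (‖w‖²/d²) wᵀΣw` with `whᵀΣwh > 0` satisfies `‖wh‖² = d`,
and `wh/√d` maximizes the Rayleigh quotient `vᵀΣv` over unit vectors `v`
(i.e. it is a leading eigenvector of `Σ`). -/
theorem linear_ae_is_pca (d : ℕ) (hd : 0 < d)
    (A : Matrix (Fin d) (Fin d) ℝ) (hsym : A.IsSymm) (hpsd : A.PosSemidef)
    (L : (Fin d → ℝ) → ℝ)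
    (hL : ∀ w : Fin d → ℝ,
      L w = A.trace - (2 / (d : ℝ)) * (w ⬝ᵥ A.mulVec w)
        + ((w ⬝ᵥ w) / (d : ℝ) ^ 2) * (w ⬝ᵥ A.mulVec w))
    (wh : Fin d → ℝ) (hmin : ∀ w : Fin d → ℝ, L wh ≤ L w)
    (hpos : 0 < wh ⬝ᵥ A.mulVec wh) :
    wh ⬝ᵥ wh = (d : ℝ) ∧
      ∀ v : Fin d → ℝ, v ⬝ᵥ v = 1 →
        v ⬝ᵥ A.mulVec v ≤
          ((Real.sqrt d)⁻¹ • wh) ⬝ᵥ A.mulVec ((Real.sqrt d)⁻¹ • wh) := by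
  have hd' : (0 : ℝ) < d := by exact_mod_cast hd
  set q : ℝ := wh ⬝ᵥ A.mulVec wh with hq
  set n : ℝ := wh ⬝ᵥ wh with hn
  have hwh : wh ≠ 0 := by
    intro h
    have : q = 0 := by rw [hq, h]; simp
    linarith
  have hnpos : 0 < n := by
    rcases lt_or_eq_of_le (dot_self_nonneg wh) with h | h
    · exact h
    · exact absurd ((dotProduct_self_eq_zero).1 h.symm) hwh
  -- Step 1: n = d
  have hnd : n = (d : ℝ) := by
    set s : ℝ := Real.sqrt ((d : ℝ) / n) with hs
    have hs2 : s ^ 2 = (d : ℝ) / n := Real.sq_sqrt (by positivity)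
    have h1 := hmin (s • wh)
    rw [hL, hL, quad_smul, dot_smul_self, hs2, ← hq, ← hn] at h1
    have hne : (d:ℝ) ≠ 0 := hd'.ne'
    have hne2 : n ≠ 0 := hnpos.ne'
    have hexp : A.trace - 2 / (d:ℝ) * ((d:ℝ)/n * q)
        + ((d:ℝ)/n * n) / (d:ℝ)^2 * ((d:ℝ)/n * q) = A.trace - q / n := by
      field_simp; ring
    rw [hexp] at h1
    have h2 : -(2/(d:ℝ))*q + n/(d:ℝ)^2*q ≤ -(q/n) := by linarith
    have h3 := mul_le_mul_of_nonneg_left h2 (by positivity : (0:ℝ) ≤ (d:ℝ)^2*n)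
    have e1 : (d:ℝ)^2*n*(-(2/(d:ℝ))*q + n/(d:ℝ)^2*q) = q*n*n - 2*(d:ℝ)*n*q := by
      field_simp; ring
    have e2 : (d:ℝ)^2*n*(-(q/n)) = -((d:ℝ)^2*q) := by field_simp
    rw [e1, e2] at h3
    have : (n - d) ^ 2 ≤ 0 := by nlinarith [h3, hpos]
    have h0 : (n - d) ^ 2 = 0 := le_antisymm this (sq_nonneg _)
    have := pow_eq_zero_iff (n := 2) (by norm_num) |>.1 h0
    linarith [sub_eq_zero.1 this]
  refine ⟨hnd, ?_⟩
  intro v hv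
  have hsd : ((Real.sqrt d)⁻¹) ^ 2 = 1 / (d : ℝ) := by
    rw [inv_pow, Real.sq_sqrt hd'.le]
    rw [one_div]
  have hrhs : ((Real.sqrt d)⁻¹ • wh) ⬝ᵥ A.mulVec ((Real.sqrt d)⁻¹ • wh) = q / d := by
    rw [quad_smul, hsd, ← hq]; ring
  rw [hrhs]
  -- compare with w = √d • v
  have h1 := hmin (Real.sqrt d • v)
  have hsd2 : (Real.sqrt d) ^ 2 = (d : ℝ) := Real.sq_sqrt hd'.le
  rw [hL, hL, quad_smul, dot_smul_self, hsd2, hv, ← hq, ← hn, hnd] at h1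
  set r : ℝ := v ⬝ᵥ A.mulVec v
  have hL1 : A.trace - 2 / (d:ℝ) * q + (d:ℝ) / (d:ℝ)^2 * q = A.trace - q / d := by
    field_simp; ring
  have hL2 : A.trace - 2 / (d:ℝ) * ((d:ℝ) * r) + ((d:ℝ) * 1) / (d:ℝ)^2 * ((d:ℝ) * r)
      = A.trace - r := by
    field_simp; ring
  rw [hL1, hL2] at h1
  linarith
end

section
/- Let (X, Y, Z) be centered jointly Gaussian with unit variances, E[XY] = 0, ρ₁ = E[XZ], ρ₂ = E[YZ]. Then for all nonnegative integers i, j, k: E[He_i(X)·He_j(Y)·He_k(Z)] = k!·ρ₁^i·ρ₂^j if k = i + j, and 0 otherwise, where He_n denotes the probabilists' Hermite polynomials. -/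
open MeasureTheory ProbabilityTheory Polynomial

section TripleHermiteAux

open Real Filter

noncomputable def gam : Measure ℝ := gaussianReal 0 1
instance : IsProbabilityMeasure gam := by unfold gam; infer_instance

lemma pdf_eq (x : ℝ) : gaussianPDFReal 0 1 x = (Real.sqrt (2 * π))⁻¹ * Real.exp (-(2⁻¹) * x ^ 2) := by
  rw [gaussianPDFReal]
  norm_num
  left
  ring_nf

lemma gam_eq : gam = volume.withDensity fun x => ((gaussianPDFReal 0 1 x).toNNReal : ENNReal) := by
  unfold gam
  rw [gaussianReal_of_var_ne_zero 0 one_ne_zero]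
  rfl

lemma integral_gam (g : ℝ → ℝ) :
    ∫ x, g x ∂gam = ∫ x, gaussianPDFReal 0 1 x * g x := by
  rw [gam_eq, integral_withDensity_eq_integral_smul (measurable_gaussianPDFReal 0 1).real_toNNReal]
  congr 1; ext x
  simp [NNReal.smul_def, Real.coe_toNNReal _ (gaussianPDFReal_nonneg 0 1 x)]

lemma integrable_gam_iff (g : ℝ → ℝ) :
    Integrable g gam ↔ Integrable (fun x => gaussianPDFReal 0 1 x * g x) volume := by
  rw [gam_eq]
  rw [integrable_withDensity_iff ((measurable_gaussianPDFReal 0 1).real_toNNReal.coe_nnreal_ennreal)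
    (Filter.Eventually.of_forall fun x => ENNReal.coe_lt_top)]
  exact integrable_congr (Filter.Eventually.of_forall fun x => by
    simp [Real.coe_toNNReal _ (gaussianPDFReal_nonneg 0 1 x), mul_comm])

lemma integrable_pow_exp (n : ℕ) :
    Integrable (fun x : ℝ => x ^ n * Real.exp (-(2⁻¹) * x ^ 2)) volume := by
  have h2 : ∀ m : ℕ, Integrable (fun x : ℝ => x ^ (2 * m) * Real.exp (-(2⁻¹) * x ^ 2)) volume := by
    intro m
    have := integrable_rpow_mul_exp_neg_mul_sq (b := 2⁻¹) (by norm_num)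
      (s := ((2 * m : ℕ) : ℝ)) (lt_of_lt_of_le neg_one_lt_zero (Nat.cast_nonneg _))
    refine this.congr (Filter.Eventually.of_forall fun x => ?_)
    simp only []
    rw [Real.rpow_natCast]
  have hb : Integrable (fun x : ℝ => Real.exp (-(2⁻¹) * x ^ 2) + x ^ (2 * n) * Real.exp (-(2⁻¹) * x ^ 2)) volume :=
    (integrable_exp_neg_mul_sq (by norm_num)).add (h2 n)
  refine hb.mono' ?_ (Filter.Eventually.of_forall fun x => ?_)
  · exact ((measurable_id.pow_const n).mul
      ((measurable_id.pow_const 2).const_mul (-(2⁻¹ : ℝ))).exp).aestronglyMeasurable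
  · have hx : |x| ^ n ≤ 1 + x ^ (2 * n) := by
      rcases le_total (|x|) 1 with h | h
      · have : |x| ^ n ≤ 1 := pow_le_one₀ (abs_nonneg x) h
        nlinarith [pow_nonneg (sq_nonneg x) n, sq_abs x, pow_mul x 2 n, abs_nonneg x,
          even_two.mul_right n |>.pow_abs x]
      · have h1 : |x| ^ n ≤ |x| ^ (2 * n) := pow_le_pow_right₀ h (by omega)
        have : |x| ^ (2 * n) = x ^ (2 * n) := (even_two.mul_right n).pow_abs x
        linarith
    have hexp : 0 ≤ Real.exp (-(2⁻¹) * x ^ 2) := (Real.exp_pos _).le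
    calc ‖x ^ n * Real.exp (-(2⁻¹) * x ^ 2)‖ = |x| ^ n * Real.exp (-(2⁻¹) * x ^ 2) := by
          rw [norm_mul, Real.norm_eq_abs, Real.norm_eq_abs, abs_pow, abs_of_nonneg hexp]
      _ ≤ (1 + x ^ (2 * n)) * Real.exp (-(2⁻¹) * x ^ 2) := by
          exact mul_le_mul_of_nonneg_right hx hexp
      _ = Real.exp (-(2⁻¹) * x ^ 2) + x ^ (2 * n) * Real.exp (-(2⁻¹) * x ^ 2) := by ring

lemma integrable_pow_gam (n : ℕ) : Integrable (fun x : ℝ => x ^ n) gam := by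
  rw [integrable_gam_iff]
  refine ((integrable_pow_exp n).const_mul ((Real.sqrt (2 * π))⁻¹)).congr
    (Filter.Eventually.of_forall fun x => ?_)
  simp only []
  rw [pdf_eq]; ring

lemma integ_congr {α : Type*} [MeasurableSpace α] {μ : Measure α} {f g : α → ℝ}
    (h : ∀ x, f x = g x) : ∫ x, f x ∂μ = ∫ x, g x ∂μ := by
  congr 1; exact funext h

lemma hasDerivAt_gauss (x : ℝ) :
    HasDerivAt (fun x : ℝ => Real.exp (-(2⁻¹) * x ^ 2)) (-x * Real.exp (-(2⁻¹) * x ^ 2)) x := by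
  have h1 : HasDerivAt (fun x : ℝ => -(2⁻¹ : ℝ) * x ^ 2) (-x) x := by
    have := (hasDerivAt_pow 2 x).const_mul (-(2⁻¹ : ℝ))
    exact this.congr_deriv (by push_cast; ring)
  have := h1.exp
  convert this using 1
  ring

lemma vol_rec (n : ℕ) : ∫ x : ℝ, x ^ (n + 1) * Real.exp (-(2⁻¹) * x ^ 2)
    = n * ∫ x : ℝ, x ^ (n - 1) * Real.exp (-(2⁻¹) * x ^ 2) := by
  have hu : ∀ x : ℝ, HasDerivAt (fun y : ℝ => y ^ n) ((n : ℝ) * x ^ (n - 1)) x :=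
    fun x => hasDerivAt_pow n x
  have key := integral_mul_deriv_eq_deriv_mul_of_integrable
    (u := fun y : ℝ => y ^ n) (v := fun x : ℝ => Real.exp (-(2⁻¹) * x ^ 2))
    (u' := fun x : ℝ => (n : ℝ) * x ^ (n - 1)) (v' := fun x => -x * Real.exp (-(2⁻¹) * x ^ 2))
    (fun x _ => hu x) (fun x _ => hasDerivAt_gauss x) ?_ ?_ ?_
  · have e1 : ∀ x : ℝ, x ^ n * (-x * Real.exp (-(2⁻¹) * x ^ 2))
        = -(x ^ (n + 1) * Real.exp (-(2⁻¹) * x ^ 2)) := by intro x; ring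
    simp only [e1] at key
    rw [integral_neg] at key
    have h2 := neg_injective key
    rw [h2, ← integral_const_mul]
    exact integ_congr fun x => by ring
  · refine ((integrable_pow_exp (n + 1)).neg.congr (Filter.Eventually.of_forall fun x => ?_))
    simp only [Pi.mul_apply, Pi.neg_apply]; ring
  · refine (((integrable_pow_exp (n - 1)).const_mul (n : ℝ)).congr
      (Filter.Eventually.of_forall fun x => ?_))
    simp only [Pi.mul_apply]; ring
  · refine ((integrable_pow_exp n).congr (Filter.Eventually.of_forall fun x => ?_))
    simp only [Pi.mul_apply]

lemma moment_rec (n : ℕ) : ∫ x, x ^ (n + 1) ∂gam = n * ∫ x, x ^ (n - 1) ∂gam := by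
  rw [integral_gam, integral_gam]
  calc ∫ x, gaussianPDFReal 0 1 x * x ^ (n + 1)
      = (Real.sqrt (2 * π))⁻¹ * ∫ x : ℝ, x ^ (n + 1) * Real.exp (-(2⁻¹) * x ^ 2) := by
        rw [← integral_const_mul]; exact integ_congr fun x => by rw [pdf_eq]; ring
    _ = (Real.sqrt (2 * π))⁻¹ * ((n : ℝ) * ∫ x : ℝ, x ^ (n - 1) * Real.exp (-(2⁻¹) * x ^ 2)) := by
        rw [vol_rec]
    _ = (n : ℝ) * ∫ x, gaussianPDFReal 0 1 x * x ^ (n - 1) := by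
        rw [show ∫ x, gaussianPDFReal 0 1 x * x ^ (n - 1)
            = (Real.sqrt (2 * π))⁻¹ * ∫ x : ℝ, x ^ (n - 1) * Real.exp (-(2⁻¹) * x ^ 2) from by
          rw [← integral_const_mul]; exact integ_congr fun x => by rw [pdf_eq]; ring]
        ring

lemma integrable_eval_gam (p : ℝ[X]) : Integrable (fun x : ℝ => Polynomial.eval x p) gam := by
  induction p using Polynomial.induction_on' with
  | add p q hp hq => exact (hp.add hq).congr (Filter.Eventually.of_forall fun x => by simp)
  | monomial n a =>
      refine ((integrable_pow_gam n).const_mul a).congr (Filter.Eventually.of_forall fun x => ?_)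
      simp

lemma stein1 (p : ℝ[X]) :
    ∫ x, x * Polynomial.eval x p ∂gam = ∫ x, Polynomial.eval x (derivative p) ∂gam := by
  induction p using Polynomial.induction_on' with
  | add p q hp hq =>
      have h1 : Integrable (fun x : ℝ => x * Polynomial.eval x p) gam := by
        have := integrable_eval_gam (X * p)
        refine this.congr (Filter.Eventually.of_forall fun x => by simp)
      have h2 : Integrable (fun x : ℝ => x * Polynomial.eval x q) gam := by
        have := integrable_eval_gam (X * q)
        refine this.congr (Filter.Eventually.of_forall fun x => by simp)
      calc ∫ x, x * Polynomial.eval x (p + q) ∂gam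
          = ∫ x, (x * Polynomial.eval x p + x * Polynomial.eval x q) ∂gam := by
            exact integ_congr fun x => by simp; ring
        _ = (∫ x, x * Polynomial.eval x p ∂gam) + ∫ x, x * Polynomial.eval x q ∂gam :=
            integral_add h1 h2
        _ = (∫ x, Polynomial.eval x (derivative p) ∂gam)
              + ∫ x, Polynomial.eval x (derivative q) ∂gam := by rw [hp, hq]
        _ = ∫ x, Polynomial.eval x (derivative (p + q)) ∂gam := by
            rw [← integral_add (integrable_eval_gam _) (integrable_eval_gam _)]
            exact integ_congr fun x => by simp
  | monomial n a =>
      simp only [eval_monomial, derivative_monomial, eval_mul, eval_natCast]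
      calc ∫ x, x * (a * x ^ n) ∂gam = a * ∫ x, x ^ (n + 1) ∂gam := by
            rw [← integral_const_mul]; exact integ_congr fun x => by ring
        _ = a * ((n : ℝ) * ∫ x, x ^ (n - 1) ∂gam) := by rw [moment_rec]
        _ = ∫ x, a * ((n:ℝ) * x ^ (n - 1)) ∂gam := by
            rw [← integral_const_mul, ← integral_const_mul]
        _ = _ := integ_congr fun x => by ring

lemma derivative_hermite (n : ℕ) :
    derivative (hermite n) = n • hermite (n - 1) := by
  induction n with
  | zero => simp [hermite_zero]
  | succ n ih =>
      rw [hermite_succ, derivative_sub, derivative_mul, derivative_X, one_mul, ih,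
        derivative_smul, Nat.add_sub_cancel]
      cases n with
      | zero => simp [hermite_zero, hermite_one]
      | succ m =>
          rw [Nat.add_sub_cancel, mul_smul_comm, succ_nsmul (hermite (m+1)) (m+1), hermite_succ m, smul_sub]
          abel

noncomputable def hR (n : ℕ) : ℝ[X] := (hermite n).map (Int.castRingHom ℝ)

lemma hR_zero : hR 0 = 1 := by simp [hR, hermite_zero]
lemma hR_one : hR 1 = X := by simp [hR, hermite_one]

lemma derivative_hR (n : ℕ) : derivative (hR n) = C (n : ℝ) * hR (n - 1) := by
  rw [hR, derivative_map, derivative_hermite]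
  rw [nsmul_eq_mul, Polynomial.map_mul, Polynomial.map_natCast, hR]
  simp

lemma hR_succ (n : ℕ) : hR (n + 1) = X * hR n - C (n : ℝ) * hR (n - 1) := by
  rw [← derivative_hR, hR, hermite_succ, Polynomial.map_sub, Polynomial.map_mul, map_X,
    ← derivative_map]
  rfl

noncomputable def mu3 : Measure (ℝ × ℝ × ℝ) := gam.prod (gam.prod gam)
instance : IsProbabilityMeasure mu3 := by unfold mu3; infer_instance

noncomputable def ev (p : ℝ × ℝ × ℝ) : MvPolynomial (Fin 3) ℝ →ₐ[ℝ] ℝ :=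
  MvPolynomial.aeval ![p.1, p.2.1, p.2.2]

noncomputable def M (n : ℕ) : ℝ := ∫ x, x ^ n ∂gam

lemma ev_monomial (d : Fin 3 →₀ ℕ) (c : ℝ) (p : ℝ × ℝ × ℝ) :
    ev p (MvPolynomial.monomial d c) = c * (p.1 ^ d 0 * (p.2.1 ^ d 1 * p.2.2 ^ d 2)) := by
  rw [ev, MvPolynomial.aeval_monomial, Finsupp.prod_fintype _ _ (fun i => pow_zero _)]
  rw [Fin.prod_univ_three]
  simp [mul_assoc]

lemma integrable_ev (P : MvPolynomial (Fin 3) ℝ) : Integrable (fun p => ev p P) mu3 := by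
  induction P using MvPolynomial.induction_on' with
  | monomial d c =>
      have h := (integrable_pow_gam (d 0)).mul_prod
        (((integrable_pow_gam (d 1)).mul_prod (integrable_pow_gam (d 2))) : Integrable _ (gam.prod gam))
      refine (h.const_mul c).congr (Filter.Eventually.of_forall fun p => ?_)
      simp only []
      rw [ev_monomial]
  | add P Q hP hQ =>
      refine (hP.add hQ).congr (Filter.Eventually.of_forall fun p => ?_)
      simp [map_add]

noncomputable def E (P : MvPolynomial (Fin 3) ℝ) : ℝ := ∫ p, ev p P ∂mu3

lemma E_add (P Q : MvPolynomial (Fin 3) ℝ) : E (P + Q) = E P + E Q := by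
  rw [E, E, E, ← integral_add (integrable_ev P) (integrable_ev Q)]
  exact integ_congr fun p => by simp [map_add]

lemma E_smul (c : ℝ) (P : MvPolynomial (Fin 3) ℝ) : E (MvPolynomial.C c * P) = c * E P := by
  rw [E, E, ← integral_const_mul]
  exact integ_congr fun p => by simp [map_mul]

lemma E_monomial (d : Fin 3 →₀ ℕ) (c : ℝ) :
    E (MvPolynomial.monomial d c) = c * (M (d 0) * (M (d 1) * M (d 2))) := by
  rw [E]
  rw [integ_congr (fun p => ev_monomial d c p)]
  rw [integral_const_mul, mu3]
  rw [integral_prod_mul (μ := gam) (ν := gam.prod gam) (f := fun x => x ^ d 0)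
    (g := fun q => q.1 ^ d 1 * q.2 ^ d 2)]
  rw [integral_prod_mul (μ := gam) (ν := gam) (f := fun x => x ^ d 1) (g := fun x => x ^ d 2)]
  rfl

lemma M_rec (n : ℕ) : M (n + 1) = n * M (n - 1) := moment_rec n
lemma M_zero : M 0 = 1 := by simp [M]

lemma stein3 (l : Fin 3) (P : MvPolynomial (Fin 3) ℝ) :
    E (MvPolynomial.X l * P) = E (MvPolynomial.pderiv l P) := by
  induction P using MvPolynomial.induction_on' with
  | add P Q hP hQ => rw [mul_add, E_add, hP, hQ, map_add, E_add]
  | monomial d c =>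
      rw [show MvPolynomial.X l * MvPolynomial.monomial d c
          = MvPolynomial.monomial (Finsupp.single l 1 + d) c from by
        rw [MvPolynomial.monomial_single_add, pow_one]]
      rw [MvPolynomial.pderiv_monomial, E_monomial, E_monomial]
      fin_cases l <;>
        simp only [Finsupp.add_apply, Finsupp.tsub_apply, Finsupp.single_apply] <;>
        norm_num [Fin.ext_iff] <;>
        rw [add_comm 1 _, M_rec] <;> push_cast <;> ring

section Main
variable (r1 r2 : ℝ)

noncomputable def sig : ℝ := Real.sqrt (1 - r1 ^ 2 - r2 ^ 2)

noncomputable def Zmv : MvPolynomial (Fin 3) ℝ :=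
  MvPolynomial.C r1 * MvPolynomial.X 0 + MvPolynomial.C r2 * MvPolynomial.X 1
    + MvPolynomial.C (sig r1 r2) * MvPolynomial.X 2

noncomputable def Pp (i j k : ℕ) : MvPolynomial (Fin 3) ℝ :=
  Polynomial.aeval (MvPolynomial.X 0) (hR i) * Polynomial.aeval (MvPolynomial.X 1) (hR j)
    * Polynomial.aeval (Zmv r1 r2) (hR k)

noncomputable def T (i j k : ℕ) : ℝ := E (Pp r1 r2 i j k)

lemma pderiv_aeval (l : Fin 3) (q : MvPolynomial (Fin 3) ℝ) (f : ℝ[X]) :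
    MvPolynomial.pderiv l (Polynomial.aeval q f)
      = Polynomial.aeval q (derivative f) * MvPolynomial.pderiv l q := by
  rw [← smul_eq_mul]
  exact Derivation.comp_aeval_eq q (MvPolynomial.pderiv l) f

lemma pderiv_Zmv_zero : MvPolynomial.pderiv (0 : Fin 3) (Zmv r1 r2) = MvPolynomial.C r1 := by
  simp [Zmv, MvPolynomial.pderiv_X]
lemma pderiv_Zmv_one : MvPolynomial.pderiv (1 : Fin 3) (Zmv r1 r2) = MvPolynomial.C r2 := by
  simp [Zmv, MvPolynomial.pderiv_X]
lemma pderiv_Zmv_two : MvPolynomial.pderiv (2 : Fin 3) (Zmv r1 r2)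
    = MvPolynomial.C (sig r1 r2) := by
  simp [Zmv, MvPolynomial.pderiv_X]

lemma pderiv_Pp_zero (i j k : ℕ) :
    MvPolynomial.pderiv (0 : Fin 3) (Pp r1 r2 i j k)
      = MvPolynomial.C (i : ℝ) * Pp r1 r2 (i - 1) j k
        + MvPolynomial.C (r1 * k) * Pp r1 r2 i j (k - 1) := by
  rw [Pp, MvPolynomial.pderiv_mul, MvPolynomial.pderiv_mul, pderiv_aeval, pderiv_aeval,
    pderiv_aeval, pderiv_Zmv_zero, derivative_hR, derivative_hR, derivative_hR,
    MvPolynomial.pderiv_X_self, MvPolynomial.pderiv_X_of_ne (by decide : (1:Fin 3) ≠ 0)]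
  rw [Pp, Pp]
  simp only [map_mul, Polynomial.aeval_C, MvPolynomial.algebraMap_eq]
  ring

lemma pderiv_Pp_one (i j k : ℕ) :
    MvPolynomial.pderiv (1 : Fin 3) (Pp r1 r2 i j k)
      = MvPolynomial.C (j : ℝ) * Pp r1 r2 i (j - 1) k
        + MvPolynomial.C (r2 * k) * Pp r1 r2 i j (k - 1) := by
  rw [Pp, MvPolynomial.pderiv_mul, MvPolynomial.pderiv_mul, pderiv_aeval, pderiv_aeval,
    pderiv_aeval, pderiv_Zmv_one, derivative_hR, derivative_hR, derivative_hR,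
    MvPolynomial.pderiv_X_self, MvPolynomial.pderiv_X_of_ne (by decide : (0:Fin 3) ≠ 1)]
  rw [Pp, Pp]
  simp only [map_mul, Polynomial.aeval_C, MvPolynomial.algebraMap_eq]
  ring

lemma pderiv_Pp_two (i j k : ℕ) :
    MvPolynomial.pderiv (2 : Fin 3) (Pp r1 r2 i j k)
      = MvPolynomial.C (sig r1 r2 * k) * Pp r1 r2 i j (k - 1) := by
  rw [Pp, MvPolynomial.pderiv_mul, MvPolynomial.pderiv_mul, pderiv_aeval, pderiv_aeval,
    pderiv_aeval, pderiv_Zmv_two, derivative_hR, derivative_hR, derivative_hR,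
    MvPolynomial.pderiv_X_of_ne (by decide : (0:Fin 3) ≠ 2),
    MvPolynomial.pderiv_X_of_ne (by decide : (1:Fin 3) ≠ 2)]
  rw [Pp]
  simp only [map_mul, Polynomial.aeval_C, MvPolynomial.algebraMap_eq]
  ring

lemma T_rec (hr : r1 ^ 2 + r2 ^ 2 ≤ 1) (i j k : ℕ) :
    T r1 r2 i j (k + 1)
      = r1 * i * T r1 r2 (i - 1) j k + r2 * j * T r1 r2 i (j - 1) k := by
  have hsig : sig r1 r2 ^ 2 = 1 - r1 ^ 2 - r2 ^ 2 := by
    rw [sig, Real.sq_sqrt]; linarith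
  have hsplit : Pp r1 r2 i j (k + 1)
      = MvPolynomial.C r1 * (MvPolynomial.X 0 * Pp r1 r2 i j k)
        + MvPolynomial.C r2 * (MvPolynomial.X 1 * Pp r1 r2 i j k)
        + MvPolynomial.C (sig r1 r2) * (MvPolynomial.X 2 * Pp r1 r2 i j k)
        + MvPolynomial.C (-(k : ℝ)) * Pp r1 r2 i j (k - 1) := by
    rw [Pp, Pp, Pp, hR_succ]
    simp only [map_sub, map_mul, Polynomial.aeval_X, Polynomial.aeval_C,
      MvPolynomial.algebraMap_eq, map_neg]
    rw [Zmv]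
    ring
  rw [T, hsplit, E_add, E_add, E_add, E_smul, E_smul, E_smul, E_smul,
    stein3, stein3, stein3, pderiv_Pp_zero, pderiv_Pp_one, pderiv_Pp_two,
    E_add, E_add, E_smul, E_smul, E_smul, E_smul, E_smul]
  have : r1 * (r1 * k) + r2 * (r2 * k) + sig r1 r2 * (sig r1 r2 * k) + -(k:ℝ) = 0 := by
    nlinarith [hsig]
  simp only [T]
  linear_combination E (Pp r1 r2 i j (k - 1)) * this
end Main

lemma integral_hR (n : ℕ) :
    ∫ x, Polynomial.eval x (hR n) ∂gam = if n = 0 then 1 else 0 := by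
  cases n with
  | zero => simp [hR_zero]
  | succ m =>
      rw [if_neg (Nat.succ_ne_zero m)]
      have h1 : ∫ x, Polynomial.eval x (hR (m + 1)) ∂gam
          = (∫ x, x * Polynomial.eval x (hR m) ∂gam)
            - ∫ x, Polynomial.eval x (derivative (hR m)) ∂gam := by
        rw [← integral_sub]
        · refine integ_congr fun x => ?_
          rw [hR_succ, derivative_hR]
          simp
        · exact (integrable_eval_gam (X * hR m)).congr
            (Filter.Eventually.of_forall fun x => by simp)
        · exact integrable_eval_gam _
      rw [h1, stein1, sub_self]

lemma ev_X0 (p : ℝ × ℝ × ℝ) : ev p (MvPolynomial.X 0) = p.1 := by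
  simp [ev]
lemma ev_X1 (p : ℝ × ℝ × ℝ) : ev p (MvPolynomial.X 1) = p.2.1 := by
  simp [ev]
lemma ev_X2 (p : ℝ × ℝ × ℝ) : ev p (MvPolynomial.X 2) = p.2.2 := by
  simp [ev]

lemma ev_aeval (p : ℝ × ℝ × ℝ) (q : MvPolynomial (Fin 3) ℝ) (f : ℝ[X]) :
    ev p (Polynomial.aeval q f) = Polynomial.eval (ev p q) f := by
  rw [← Polynomial.aeval_algHom_apply (ev p) q f, ← Polynomial.coe_aeval_eq_eval]

lemma ev_Pp (r1 r2 : ℝ) (i j k : ℕ) (p : ℝ × ℝ × ℝ) :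
    ev p (Pp r1 r2 i j k) = Polynomial.eval p.1 (hR i) * Polynomial.eval p.2.1 (hR j)
      * Polynomial.eval (r1 * p.1 + r2 * p.2.1 + sig r1 r2 * p.2.2) (hR k) := by
  rw [Pp, map_mul, map_mul, ev_aeval, ev_aeval, ev_aeval, ev_X0, ev_X1]
  congr 2
  rw [Zmv]
  simp only [map_add, map_mul, ev_X0, ev_X1, ev_X2, AlgHom.commutes]
  simp [Algebra.algebraMap_self_apply]

lemma T_base (r1 r2 : ℝ) (i j : ℕ) :
    T r1 r2 i j 0 = (if i = 0 then 1 else 0) * (if j = 0 then 1 else 0) := by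
  rw [T, E]
  rw [integ_congr (fun p => by
    rw [ev_Pp, hR_zero]
    simp : ∀ p : ℝ × ℝ × ℝ, ev p (Pp r1 r2 i j 0)
      = Polynomial.eval p.1 (hR i) * (Polynomial.eval p.2.1 (hR j) * 1))]
  rw [mu3, integral_prod_mul (f := fun x => Polynomial.eval x (hR i))
      (g := fun q : ℝ × ℝ => Polynomial.eval q.1 (hR j) * 1),
    integral_prod_mul (f := fun x => Polynomial.eval x (hR j)) (g := fun _ : ℝ => (1:ℝ))]
  simp [integral_hR]

lemma T_closed (r1 r2 : ℝ) (hr : r1 ^ 2 + r2 ^ 2 ≤ 1) (k i j : ℕ) :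
    T r1 r2 i j k = if k = i + j then (k.factorial : ℝ) * r1 ^ i * r2 ^ j else 0 := by
  induction k generalizing i j with
  | zero =>
      rw [T_base]
      by_cases hi : i = 0 <;> by_cases hj : j = 0 <;>
        simp [hi, hj, Nat.factorial, eq_comm, Ne.symm]
  | succ k IH =>
      rw [T_rec r1 r2 hr, IH, IH]
      rcases i with _ | a <;> rcases j with _ | b
      · simp
      · simp only [Nat.cast_zero, mul_zero, zero_mul, zero_add, Nat.add_sub_cancel, pow_zero]
        by_cases hk : k = b
        · subst hk
          rw [if_pos (by omega), if_pos (by omega)]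
          simp only [Nat.factorial_succ]
          push_cast; ring
        · rw [if_neg (by omega), if_neg (by omega)]
          ring
      · simp only [Nat.cast_zero, mul_zero, zero_mul, add_zero, Nat.add_sub_cancel, pow_zero]
        by_cases hk : k = a
        · subst hk
          rw [if_pos (by omega), if_pos (by omega)]
          simp only [Nat.factorial_succ]
          push_cast; ring
        · rw [if_neg (by omega), if_neg (by omega)]
          ring
      · simp only [Nat.add_sub_cancel]
        by_cases hk : k = a + b + 1
        · subst hk
          rw [if_pos (by omega), if_pos (by omega), if_pos (by omega)]
          simp only [Nat.factorial_succ]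
          push_cast; ring
        · rw [if_neg (by omega), if_neg (by omega), if_neg (by omega)]
          ring


end TripleHermiteAux

lemma aeval_hermite_eq (x : ℝ) (n : ℕ) :
    (Polynomial.aeval x (hermite n) : ℝ) = Polynomial.eval x (hR n) := by
  rw [hR, Polynomial.eval_map, Polynomial.aeval_def, algebraMap_int_eq]

/-- Triple Hermite identity: for a centered jointly Gaussian triple `(X, Y, Z)` with unit
variances, `E[XY] = 0`, `E[XZ] = ρ₁`, `E[YZ] = ρ₂` (realized here by the Gaussian
regression construction `Z = ρ₁ X + ρ₂ Y + √(1-ρ₁²-ρ₂²) ε`), one has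
`E[He_i(X) He_j(Y) He_k(Z)] = 1_{k = i+j} · k! · ρ₁^i · ρ₂^j`. -/
theorem triple_hermite_identity (ρ₁ ρ₂ : ℝ) (hρ : ρ₁ ^ 2 + ρ₂ ^ 2 ≤ 1) (i j k : ℕ)
    (μ : Measure (ℝ × ℝ × ℝ))
    (hμ : μ = (gaussianReal 0 1).prod ((gaussianReal 0 1).prod (gaussianReal 0 1)))
    (X Y Z : ℝ × ℝ × ℝ → ℝ)
    (hX : X = fun p => p.1) (hY : Y = fun p => p.2.1)
    (hZ : Z = fun p => ρ₁ * p.1 + ρ₂ * p.2.1 + Real.sqrt (1 - ρ₁ ^ 2 - ρ₂ ^ 2) * p.2.2) :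
    ∫ p, (aeval (X p) (hermite i)) * (aeval (Y p) (hermite j)) * (aeval (Z p) (hermite k)) ∂μ
      = if k = i + j then (k.factorial : ℝ) * ρ₁ ^ i * ρ₂ ^ j else 0 := by
  subst hμ hX hY hZ
  have hmu : (gaussianReal 0 1).prod ((gaussianReal 0 1).prod (gaussianReal 0 1)) = mu3 := rfl
  rw [hmu]
  have h1 : ∀ p : ℝ × ℝ × ℝ,
      (Polynomial.aeval p.1 (hermite i) : ℝ) * (Polynomial.aeval p.2.1 (hermite j))
        * (Polynomial.aeval (ρ₁ * p.1 + ρ₂ * p.2.1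
            + Real.sqrt (1 - ρ₁ ^ 2 - ρ₂ ^ 2) * p.2.2) (hermite k))
      = ev p (Pp ρ₁ ρ₂ i j k) := by
    intro p
    rw [ev_Pp, aeval_hermite_eq, aeval_hermite_eq, aeval_hermite_eq]
    rfl
  rw [show (∫ p, (Polynomial.aeval p.1 (hermite i) : ℝ) * (Polynomial.aeval p.2.1 (hermite j))
        * (Polynomial.aeval (ρ₁ * p.1 + ρ₂ * p.2.1
            + Real.sqrt (1 - ρ₁ ^ 2 - ρ₂ ^ 2) * p.2.2) (hermite k)) ∂mu3)
      = T ρ₁ ρ₂ i j k from integ_congr h1]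
  exact T_closed ρ₁ ρ₂ hρ k i j
end

section
/- Let x = λ·u/√d + S(ν·v/√d + z), where z ~ N(0, I_d) is independent of the scalar latents (λ, ν) satisfying E[λ] = E[ν] = 0, u, v are fixed orthogonal vectors in ℝᵈ of norm √d, and S = I - (E[ν²]/(1 + E[ν²] + √(1+E[ν²])))·vvᵀ/d. Then the conditional covariance of x given (u, v) equals I + E[λ²]·uuᵀ/d + E[λν]·(uvᵀS + Svuᵀ)/d. In particular, if E[λν] = 0 the covariance carries no information about v. -/
open MeasureTheory ProbabilityTheory Matrix

section SCAux

open Real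
open scoped ENNReal NNReal

private theorem SC_integrable_fin_prod {n : ℕ} (μ : Measure ℝ) [IsProbabilityMeasure μ]
    {f : Fin n → ℝ → ℝ} (hf : ∀ i, Integrable (f i) μ) :
    Integrable (fun x : Fin n → ℝ => ∏ i, f i (x i)) (Measure.pi fun _ => μ) := by
  induction n with
  | zero =>
      simp only [Finset.univ_eq_empty, Finset.prod_empty]
      exact integrable_const 1
  | succ n n_ih =>
      have := ((measurePreserving_piFinSuccAbove (fun _ : Fin (n + 1) => μ) 0).symm)
      rw [← this.integrable_comp_emb (MeasurableEquiv.measurableEmbedding _)]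
      simp_rw [MeasurableEquiv.piFinSuccAbove_symm_apply, Fin.insertNthEquiv,
        Fin.prod_univ_succ, Fin.insertNth_zero]
      simp only [Fin.zero_succAbove, Function.comp_def, Fin.cons_zero, Fin.cons_succ]
      have : Integrable (fun (x : Fin n → ℝ) ↦ ∏ j, f (Fin.succ j) (x j)) (Measure.pi fun _ => μ) :=
        n_ih (fun i ↦ hf _)
      exact Integrable.mul_prod (hf 0) this

private theorem SC_integral_fin_prod {n : ℕ} (μ : Measure ℝ) [IsProbabilityMeasure μ]
    (f : Fin n → ℝ → ℝ) :
    ∫ x : Fin n → ℝ, ∏ i, f i (x i) ∂(Measure.pi fun _ => μ) = ∏ i, ∫ y, f i y ∂μ := by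
  induction n with
  | zero => simp
  | succ n n_ih =>
      calc
        _ = ∫ x : ℝ × (Fin n → ℝ),
            f 0 x.1 * ∏ i : Fin n, f (Fin.succ i) (x.2 i) ∂(μ.prod (Measure.pi fun _ => μ)) := by
          rw [← ((measurePreserving_piFinSuccAbove
            (fun _ : Fin (n + 1) => μ) 0).symm).integral_comp']
          simp_rw [MeasurableEquiv.piFinSuccAbove_symm_apply, Fin.insertNthEquiv,
            Fin.prod_univ_succ, Fin.insertNth_zero]
          rfl
        _ = (∫ y, f 0 y ∂μ) * ∏ i : Fin n, ∫ y, f (Fin.succ i) y ∂μ := by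
          rw [← n_ih, ← integral_prod_mul]
        _ = ∏ i, ∫ y, f i y ∂μ := by rw [Fin.prod_univ_succ]

private lemma SC_gaussianPDFReal_zero_one (y : ℝ) :
    gaussianPDFReal 0 1 y = (Real.sqrt (2 * π))⁻¹ * rexp (-(1/2) * y ^ 2) := by
  simp only [gaussianPDFReal, NNReal.coe_one, mul_one, sub_zero]
  ring_nf

private lemma SC_gaussianReal_zero_one :
    gaussianReal 0 1 = volume.withDensity
      (fun y => ((gaussianPDFReal 0 1 y).toNNReal : ℝ≥0∞)) := by
  rw [gaussianReal_of_var_ne_zero _ one_ne_zero]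
  rfl

private lemma SC_integral_gaussianReal_eq (g : ℝ → ℝ) :
    ∫ y, g y ∂(gaussianReal 0 1) = ∫ y, gaussianPDFReal 0 1 y * g y := by
  rw [SC_gaussianReal_zero_one,
    integral_withDensity_eq_integral_smul
      (f := fun y => (gaussianPDFReal 0 1 y).toNNReal)
      ((measurable_gaussianPDFReal 0 1).real_toNNReal) g]
  congr 1
  ext y
  rw [NNReal.smul_def, smul_eq_mul, Real.coe_toNNReal _ (gaussianPDFReal_nonneg 0 1 y)]

private lemma SC_integrable_gaussianReal_iff (g : ℝ → ℝ) :
    Integrable g (gaussianReal 0 1) ↔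
      Integrable (fun y => gaussianPDFReal 0 1 y * g y) volume := by
  rw [SC_gaussianReal_zero_one, integrable_withDensity_iff_integrable_smul
      (f := fun y => (gaussianPDFReal 0 1 y).toNNReal)
      ((measurable_gaussianPDFReal 0 1).real_toNNReal)]
  constructor <;> intro h <;> refine h.congr (Filter.Eventually.of_forall fun y => ?_) <;>
    simp only [NNReal.smul_def, smul_eq_mul, Real.coe_toNNReal _ (gaussianPDFReal_nonneg 0 1 y)]

private lemma SC_integrable_id_gauss : Integrable (fun y : ℝ => y) (gaussianReal 0 1) := by
  rw [SC_integrable_gaussianReal_iff]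
  have h := (integrable_mul_exp_neg_mul_sq (b := (1/2:ℝ)) (by norm_num)).const_mul
    ((Real.sqrt (2 * π))⁻¹)
  refine h.congr (Filter.Eventually.of_forall fun y => ?_)
  simp only [SC_gaussianPDFReal_zero_one]
  ring

private lemma SC_integrable_sq_gauss : Integrable (fun y : ℝ => y ^ 2) (gaussianReal 0 1) := by
  rw [SC_integrable_gaussianReal_iff]
  have h := (integrable_rpow_mul_exp_neg_mul_sq (b := (1/2:ℝ)) (by norm_num)
    (s := (2:ℝ)) (by norm_num)).const_mul ((Real.sqrt (2 * π))⁻¹)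
  refine h.congr (Filter.Eventually.of_forall fun y => ?_)
  simp only [SC_gaussianPDFReal_zero_one, show ((2:ℝ) = ((2:ℕ):ℝ)) by norm_num,
    Real.rpow_natCast]
  ring

private lemma SC_integral_id_gauss : ∫ y, y ∂(gaussianReal 0 1) = 0 := by
  rw [SC_integral_gaussianReal_eq]
  set g : ℝ → ℝ := fun y => gaussianPDFReal 0 1 y * y with hg
  have hodd : ∀ y : ℝ, g (-y) = -g y := by
    intro y
    simp only [hg, SC_gaussianPDFReal_zero_one]
    ring_nf
  have h := integral_neg_eq_self g (volume : Measure ℝ)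
  have h2 : ∫ y, g (-y) = -∫ y, g y := by
    simp only [hodd]
    exact integral_neg g
  rw [h2] at h
  linarith

private lemma SC_integral_sq_gauss : ∫ y, y ^ 2 ∂(gaussianReal 0 1) = 1 := by
  rw [SC_integral_gaussianReal_eq]
  have h2p : ∀ x : ℝ, x ^ (2:ℝ) = x ^ 2 := fun x => by
    rw [show (2:ℝ) = ((2:ℕ):ℝ) by norm_num, Real.rpow_natCast]
  have hpt : ∀ y : ℝ, gaussianPDFReal 0 1 y * y ^ 2
      = (Real.sqrt (2 * π))⁻¹ * (y ^ 2 * rexp (-(1/2) * y ^ 2)) := fun y => by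
    rw [SC_gaussianPDFReal_zero_one]; ring
  simp only [hpt]
  rw [integral_const_mul]
  have heven : ∫ y : ℝ, y ^ 2 * rexp (-(1/2) * y ^ 2)
      = 2 * ∫ y in Set.Ioi (0:ℝ), y ^ 2 * rexp (-(1/2) * y ^ 2) := by
    have h := integral_comp_abs (f := fun y : ℝ => y ^ 2 * rexp (-(1/2) * y ^ 2))
    simpa only [sq_abs] using h
  have hval := integral_rpow_mul_exp_neg_mul_rpow (p := (2:ℝ)) (q := (2:ℝ)) (b := (1/2:ℝ))
    (by norm_num) (by norm_num) (by norm_num)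
  simp only [h2p] at hval
  have hgamma : Real.Gamma (((2:ℝ) + 1) / 2) = (1/2) * Real.sqrt π := by
    rw [show ((2:ℝ) + 1) / 2 = 1/2 + 1 by norm_num,
      Real.Gamma_add_one (by norm_num : (1/2:ℝ) ≠ 0), Real.Gamma_one_half_eq]
  have hrpow : (1/2 : ℝ) ^ (-((2:ℝ) + 1) / 2 : ℝ) = 2 * Real.sqrt 2 := by
    rw [show (1/2:ℝ) = 2⁻¹ by norm_num,
      Real.inv_rpow (by norm_num : (0:ℝ) ≤ 2),
      show (-((2:ℝ) + 1) / 2 : ℝ) = -(3/2) by norm_num,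
      Real.rpow_neg (by norm_num : (0:ℝ) ≤ 2), inv_inv,
      show (3/2 : ℝ) = 1 + 1/2 by norm_num,
      Real.rpow_add (by norm_num : (0:ℝ) < 2), Real.rpow_one,
      ← Real.sqrt_eq_rpow]
  rw [heven, hval, hgamma, hrpow]
  have hs2 : Real.sqrt 2 * Real.sqrt π = Real.sqrt (2 * π) :=
    (Real.sqrt_mul (by norm_num) π).symm
  have hne : Real.sqrt (2 * π) ≠ 0 := by
    refine Real.sqrt_ne_zero'.mpr ?_
    positivity
  field_simp
  exact hs2

private lemma SC_pair_prod_eq {d : ℕ} (k l : Fin d) (z : Fin d → ℝ) :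
    ∏ i, ((if i = k then z i else 1) * (if i = l then z i else 1)) = z k * z l := by
  rw [Finset.prod_mul_distrib, Finset.prod_ite_eq' Finset.univ k (fun i => z i),
    Finset.prod_ite_eq' Finset.univ l (fun i => z i)]
  simp

private lemma SC_integrable_pair_f {d : ℕ} (k l i : Fin d) :
    Integrable (fun y : ℝ => (if i = k then y else 1) * (if i = l then y else 1))
      (gaussianReal 0 1) := by
  by_cases hik : i = k <;> by_cases hil : i = l <;> simp only [hik, hil, if_pos, if_neg,
    if_true, if_false, mul_one, one_mul, eq_self_iff_true] <;> simp_all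
  · simpa [sq] using SC_integrable_sq_gauss
  · exact SC_integrable_id_gauss
  · exact SC_integrable_id_gauss

private lemma SC_integrable_coord_pair {d : ℕ} (k l : Fin d) :
    Integrable (fun z : Fin d → ℝ => z k * z l)
      (Measure.pi fun _ : Fin d => gaussianReal 0 1) := by
  have h := SC_integrable_fin_prod (gaussianReal 0 1)
    (f := fun i => fun y : ℝ => (if i = k then y else 1) * (if i = l then y else 1))
    (fun i => SC_integrable_pair_f k l i)
  refine h.congr (Filter.Eventually.of_forall fun z => ?_)
  exact SC_pair_prod_eq k l z

private lemma SC_integral_coord_pair {d : ℕ} (k l : Fin d) :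
    ∫ z, z k * z l ∂(Measure.pi fun _ : Fin d => gaussianReal 0 1)
      = if k = l then 1 else 0 := by
  have h := SC_integral_fin_prod (gaussianReal 0 1)
    (fun i => fun y : ℝ => (if i = k then y else 1) * (if i = l then y else 1))
  have hl : ∫ z, z k * z l ∂(Measure.pi fun _ : Fin d => gaussianReal 0 1)
      = ∏ i, ∫ y, (if i = k then y else 1) * (if i = l then y else 1) ∂(gaussianReal 0 1) := by
    rw [← h]
    exact integral_congr_ae (Filter.Eventually.of_forall fun z => (SC_pair_prod_eq k l z).symm)
  rw [hl]
  by_cases hkl : k = l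
  · subst hkl
    rw [if_pos rfl]
    refine Finset.prod_eq_one fun i _ => ?_
    by_cases hik : i = k
    · subst hik
      simp only [if_pos rfl]
      have hyy : ∀ y : ℝ, y * y = y ^ 2 := fun y => (sq y).symm
      simp only [hyy]
      exact SC_integral_sq_gauss
    · simp [hik]
  · rw [if_neg hkl]
    refine Finset.prod_eq_zero (Finset.mem_univ k) ?_
    simp only [if_pos rfl, if_neg hkl, mul_one]
    exact SC_integral_id_gauss

private lemma SC_integrable_coord {d : ℕ} (k : Fin d) :
    Integrable (fun z : Fin d → ℝ => z k)
      (Measure.pi fun _ : Fin d => gaussianReal 0 1) := by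
  have h := SC_integrable_fin_prod (gaussianReal 0 1)
    (f := fun i => fun y : ℝ => if i = k then y else 1)
    (fun i => by
      by_cases hik : i = k
      · simp only [hik, if_pos rfl]; exact SC_integrable_id_gauss
      · simp only [hik, if_neg hik]; exact integrable_const 1)
  refine h.congr (Filter.Eventually.of_forall fun z => ?_)
  simp [Finset.prod_ite_eq']

private lemma SC_integral_coord {d : ℕ} (k : Fin d) :
    ∫ z, z k ∂(Measure.pi fun _ : Fin d => gaussianReal 0 1) = 0 := by
  have h := SC_integral_fin_prod (gaussianReal 0 1)
    (fun i => fun y : ℝ => if i = k then y else 1)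
  have hl : ∫ z, z k ∂(Measure.pi fun _ : Fin d => gaussianReal 0 1)
      = ∏ i, ∫ y, (if i = k then y else 1) ∂(gaussianReal 0 1) := by
    rw [← h]
    refine integral_congr_ae (Filter.Eventually.of_forall fun z => ?_)
    simp [Finset.prod_ite_eq']
  rw [hl]
  refine Finset.prod_eq_zero (Finset.mem_univ k) ?_
  simp only [if_pos rfl]
  exact SC_integral_id_gauss

private lemma SC_key_s {m : ℝ} (hm : 0 ≤ m) :
    m * (1 - m / (1 + m + Real.sqrt (1 + m))) * (1 - m / (1 + m + Real.sqrt (1 + m)))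
      = 2 * (m / (1 + m + Real.sqrt (1 + m)))
        - (m / (1 + m + Real.sqrt (1 + m))) * (m / (1 + m + Real.sqrt (1 + m))) := by
  set r := Real.sqrt (1 + m) with hr
  have hr2 : r ^ 2 = 1 + m := Real.sq_sqrt (by linarith)
  have hr0 : 0 ≤ r := Real.sqrt_nonneg _
  have hr1 : 1 ≤ r := by nlinarith
  have hm' : m = r ^ 2 - 1 := by linarith
  rw [hm']
  have hden : 1 + (r ^ 2 - 1) + r ≠ 0 := by nlinarith
  have hrne : r ≠ 0 := by linarith
  field_simp
  ring

end SCAux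
/-- Covariance of the spiked cumulant model: for
`x = (λ/√d) u + S((ν/√d) v + z)` with `z ~ N(0, I_d)` independent of the centered latents
`(λ, ν)`, `u ⊥ v` of norm `√d`, and whitening matrix
`S = I - (E[ν²]/(1+E[ν²]+√(1+E[ν²]))) vvᵀ/d`, the conditional covariance of `x` given
`(u, v)` equals `I + E[λ²] uuᵀ/d + E[λν](uvᵀS + Svuᵀ)/d`. -/
theorem spiked_cumulant_covariance
    {Ω : Type*} [MeasurableSpace Ω] (P : Measure Ω) [IsProbabilityMeasure P]
    (d : ℕ) (hd : 0 < d) (u v : Fin d → ℝ)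
    (hu : u ⬝ᵥ u = (d : ℝ)) (hv : v ⬝ᵥ v = (d : ℝ)) (huv : u ⬝ᵥ v = 0)
    (lam nu : Ω → ℝ) (hlam : Measurable lam) (hnu : Measurable nu)
    (hc1 : ∫ ω, lam ω ∂P = 0) (hc2 : ∫ ω, nu ω ∂P = 0)
    (hi1 : Integrable (fun ω => lam ω ^ 2) P)
    (hi2 : Integrable (fun ω => nu ω ^ 2) P)
    (hi3 : Integrable (fun ω => lam ω * nu ω) P)
    (S : Matrix (Fin d) (Fin d) ℝ)
    (hS : S = 1 - (((∫ ω, nu ω ^ 2 ∂P) /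
        (1 + (∫ ω, nu ω ^ 2 ∂P) + Real.sqrt (1 + ∫ ω, nu ω ^ 2 ∂P))) / d) •
          vecMulVec v v)
    (x : Ω × (Fin d → ℝ) → Fin d → ℝ)
    (hx : ∀ q, x q = ((lam q.1 / Real.sqrt d) • u)
        + S.mulVec (((nu q.1 / Real.sqrt d) • v) + q.2)) :
    ∀ i j : Fin d,
      ∫ q, x q i * x q j ∂(P.prod (Measure.pi fun _ : Fin d => gaussianReal 0 1))
        = ((1 : Matrix (Fin d) (Fin d) ℝ)
            + ((∫ ω, lam ω ^ 2 ∂P) / d) • vecMulVec u u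
            + ((∫ ω, lam ω * nu ω ∂P) / d) • (vecMulVec u v * S + S * vecMulVec v u)) i j := by
  intro i j
  have hd0 : (0:ℝ) < d := Nat.cast_pos.mpr hd
  have hdne : (d:ℝ) ≠ 0 := ne_of_gt hd0
  have hsd : Real.sqrt d * Real.sqrt d = (d:ℝ) := Real.mul_self_sqrt hd0.le
  have hsdne : Real.sqrt d ≠ 0 := by positivity
  set m := ∫ ω, nu ω ^ 2 ∂P with hm_def
  set L2 := ∫ ω, lam ω ^ 2 ∂P with hL2_def
  set L11 := ∫ ω, lam ω * nu ω ∂P with hL11_def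
  have hm0 : 0 ≤ m := by rw [hm_def]; exact integral_nonneg fun ω => sq_nonneg _
  set s := m / (1 + m + Real.sqrt (1 + m)) with hs_def
  have hvv : ∑ k, v k * v k = (d:ℝ) := by simpa [dotProduct] using hv
  have hSe : ∀ a b, S a b = (if a = b then (1:ℝ) else 0) - s/d * (v a * v b) := by
    intro a b
    rw [hS]
    simp only [Matrix.sub_apply, Matrix.one_apply, Matrix.smul_apply, vecMulVec_apply,
      smul_eq_mul]
    try ring
  have hSv : ∀ a, ∑ k, S a k * v k = (1 - s) * v a := by
    intro a
    have h1 : ∀ k, S a k * v k = (if a = k then v k else 0) - (s/d * v a) * (v k * v k) := by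
      intro k
      rw [hSe]
      by_cases h : a = k <;> simp [h] <;> try ring
    rw [Finset.sum_congr rfl fun k _ => h1 k, Finset.sum_sub_distrib, Finset.sum_ite_eq,
      ← Finset.mul_sum, hvv]
    simp only [Finset.mem_univ, if_true]
    field_simp
    try ring
  have hvS : ∀ b, ∑ k, v k * S k b = (1 - s) * v b := by
    intro b
    have h1 : ∀ k, v k * S k b = (if b = k then v k else 0) - (s/d * v b) * (v k * v k) := by
      intro k
      rw [hSe]
      by_cases h : k = b
      · subst h; simp <;> try ring
      · rw [if_neg h, if_neg (fun hh => h hh.symm)]; try ring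
    rw [Finset.sum_congr rfl fun k _ => h1 k, Finset.sum_sub_distrib, Finset.sum_ite_eq,
      ← Finset.mul_sum, hvv]
    simp only [Finset.mem_univ, if_true]
    field_simp
    try ring
  set A : Fin d → Ω → ℝ :=
    fun a ω => lam ω * (u a / Real.sqrt d) + nu ω * ((1 - s) * v a / Real.sqrt d) with hA
  set C : Fin d → (Fin d → ℝ) → ℝ := fun a z => ∑ k, S a k * z k with hC
  have hxA : ∀ (a : Fin d) (q : Ω × (Fin d → ℝ)), x q a = A a q.1 + C a q.2 := by
    intro a q
    rw [hx q]
    simp only [Pi.add_apply, Pi.smul_apply, smul_eq_mul, Matrix.mulVec, dotProduct]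
    have hsplit : ∑ k, S a k * ((nu q.1 / Real.sqrt d) * v k + q.2 k)
        = (nu q.1 / Real.sqrt d) * (∑ k, S a k * v k) + ∑ k, S a k * q.2 k := by
      rw [Finset.mul_sum, ← Finset.sum_add_distrib]
      exact Finset.sum_congr rfl fun k _ => by ring
    rw [hsplit, hSv a]
    simp only [hA, hC]
    ring
  -- pointwise decomposition
  have hpt : ∀ q : Ω × (Fin d → ℝ), x q i * x q j =
      (A i q.1 * A j q.1) * (1:ℝ)
      + A i q.1 * C j q.2
      + A j q.1 * C i q.2
      + (1:ℝ) * (∑ k, ∑ l, (S i k * S j l) * (q.2 k * q.2 l)) := by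
    intro q
    rw [hxA i q, hxA j q]
    have hCC : C i q.2 * C j q.2 = ∑ k, ∑ l, (S i k * S j l) * (q.2 k * q.2 l) := by
      simp only [hC]
      rw [Finset.sum_mul_sum]
      exact Finset.sum_congr rfl fun k _ => Finset.sum_congr rfl fun l _ => by ring
    calc (A i q.1 + C i q.2) * (A j q.1 + C j q.2)
        = (A i q.1 * A j q.1) * 1 + A i q.1 * C j q.2 + A j q.1 * C i q.2
          + (1:ℝ) * (C i q.2 * C j q.2) := by ring
      _ = _ := by rw [hCC]
  -- integrability of latent pieces
  have hIlam : Integrable lam P := by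
    refine Integrable.mono' ((hi1.add (integrable_const 1)).div_const 2)
      hlam.aestronglyMeasurable (Filter.Eventually.of_forall fun ω => ?_)
    rw [Real.norm_eq_abs]
    simp only [Pi.add_apply]
    nlinarith [sq_nonneg (|lam ω| - 1), sq_abs (lam ω), abs_nonneg (lam ω)]
  have hInu : Integrable nu P := by
    refine Integrable.mono' ((hi2.add (integrable_const 1)).div_const 2)
      hnu.aestronglyMeasurable (Filter.Eventually.of_forall fun ω => ?_)
    rw [Real.norm_eq_abs]
    simp only [Pi.add_apply]
    nlinarith [sq_nonneg (|nu ω| - 1), sq_abs (nu ω), abs_nonneg (nu ω)]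
  have hIA : ∀ a, Integrable (A a) P := by
    intro a
    simp only [hA]
    exact (hIlam.mul_const _).add (hInu.mul_const _)
  have hAab : ∀ a b : Fin d, (fun ω => A a ω * A b ω) = fun ω =>
      ((u a / Real.sqrt d) * (u b / Real.sqrt d)) * lam ω ^ 2
      + ((u a / Real.sqrt d) * ((1 - s) * v b / Real.sqrt d)
          + (u b / Real.sqrt d) * ((1 - s) * v a / Real.sqrt d)) * (lam ω * nu ω)
      + (((1 - s) * v a / Real.sqrt d) * ((1 - s) * v b / Real.sqrt d)) * nu ω ^ 2 := by
    intro a b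
    funext ω
    simp only [hA]
    ring
  have hIA2 : Integrable (fun ω => A i ω * A j ω) P := by
    rw [hAab i j]
    exact ((hi1.const_mul _).add (hi3.const_mul _)).add (hi2.const_mul _)
  have hdd : ∀ p q : ℝ, (p / Real.sqrt d) * (q / Real.sqrt d) = p * q / d := by
    intro p q
    rw [div_mul_div_comm, hsd]
  have hEA2 : ∫ ω, A i ω * A j ω ∂P
      = (u i * u j / d) * L2 + ((1 - s) * (u i * v j + v i * u j) / d) * L11
        + ((1 - s) * (1 - s) * (v i * v j) / d) * m := by
    have hic1 : Integrable (fun ω =>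
        ((u i / Real.sqrt d) * (u j / Real.sqrt d)) * lam ω ^ 2) P := hi1.const_mul _
    have hic2 : Integrable (fun ω =>
        ((u i / Real.sqrt d) * ((1 - s) * v j / Real.sqrt d)
          + (u j / Real.sqrt d) * ((1 - s) * v i / Real.sqrt d)) * (lam ω * nu ω)) P :=
      hi3.const_mul _
    have hic3 : Integrable (fun ω =>
        (((1 - s) * v i / Real.sqrt d) * ((1 - s) * v j / Real.sqrt d)) * nu ω ^ 2) P :=
      hi2.const_mul _
    have hic12 : Integrable (fun ω =>
        ((u i / Real.sqrt d) * (u j / Real.sqrt d)) * lam ω ^ 2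
        + ((u i / Real.sqrt d) * ((1 - s) * v j / Real.sqrt d)
            + (u j / Real.sqrt d) * ((1 - s) * v i / Real.sqrt d)) * (lam ω * nu ω)) P :=
      hic1.add hic2
    rw [hAab i j, integral_add hic12 hic3, integral_add hic1 hic2,
      integral_const_mul, integral_const_mul, integral_const_mul,
      ← hL2_def, ← hL11_def, ← hm_def, hdd, hdd, hdd, hdd]
    ring
  -- gaussian side
  have hIC : ∀ a, Integrable (C a) (Measure.pi fun _ : Fin d => gaussianReal 0 1) := by
    intro a
    simp only [hC]
    exact integrable_finset_sum _ fun k _ => (SC_integrable_coord k).const_mul (S a k)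
  have hEC : ∀ a, ∫ z, C a z ∂(Measure.pi fun _ : Fin d => gaussianReal 0 1) = 0 := by
    intro a
    simp only [hC]
    rw [integral_finset_sum _ fun k _ => (SC_integrable_coord k).const_mul (S a k)]
    refine Finset.sum_eq_zero fun k _ => ?_
    rw [integral_const_mul, SC_integral_coord k, mul_zero]
  have hICC : Integrable (fun z : Fin d → ℝ => ∑ k, ∑ l, (S i k * S j l) * (z k * z l))
      (Measure.pi fun _ : Fin d => gaussianReal 0 1) :=
    integrable_finset_sum _ fun k _ => integrable_finset_sum _ fun l _ =>
      (SC_integrable_coord_pair k l).const_mul _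
  have hECC : ∫ z, (∑ k, ∑ l, (S i k * S j l) * (z k * z l))
        ∂(Measure.pi fun _ : Fin d => gaussianReal 0 1)
      = ∑ k, S i k * S j k := by
    rw [integral_finset_sum _ fun k _ => integrable_finset_sum _ fun l _ =>
      (SC_integrable_coord_pair k l).const_mul _]
    refine Finset.sum_congr rfl fun k _ => ?_
    rw [integral_finset_sum _ fun l _ => (SC_integrable_coord_pair k l).const_mul _]
    have : ∀ l, ∫ z, (S i k * S j l) * (z k * z l)
          ∂(Measure.pi fun _ : Fin d => gaussianReal 0 1)
        = (S i k * S j l) * (if k = l then 1 else 0) := fun l => by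
      rw [integral_const_mul, SC_integral_coord_pair k l]
    simp only [this, mul_ite, mul_one, mul_zero]
    rw [Finset.sum_ite_eq Finset.univ k (fun l => S i k * S j l)]
    simp
  -- put it together
  have hsplit2 : ∫ q, x q i * x q j ∂(P.prod (Measure.pi fun _ : Fin d => gaussianReal 0 1))
      = (∫ ω, A i ω * A j ω ∂P) * (∫ _z, (1:ℝ) ∂(Measure.pi fun _ : Fin d => gaussianReal 0 1))
        + (∫ ω, A i ω ∂P) * (∫ z, C j z ∂(Measure.pi fun _ : Fin d => gaussianReal 0 1))
        + (∫ ω, A j ω ∂P) * (∫ z, C i z ∂(Measure.pi fun _ : Fin d => gaussianReal 0 1))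
        + (∫ _ω, (1:ℝ) ∂P) * (∫ z, (∑ k, ∑ l, (S i k * S j l) * (z k * z l))
            ∂(Measure.pi fun _ : Fin d => gaussianReal 0 1)) := by
    have h1 : Integrable (fun q : Ω × (Fin d → ℝ) => (A i q.1 * A j q.1) * 1)
        (P.prod (Measure.pi fun _ : Fin d => gaussianReal 0 1)) :=
      hIA2.mul_prod (integrable_const 1)
    have h2 : Integrable (fun q : Ω × (Fin d → ℝ) => A i q.1 * C j q.2)
        (P.prod (Measure.pi fun _ : Fin d => gaussianReal 0 1)) :=
      (hIA i).mul_prod (hIC j)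
    have h3 : Integrable (fun q : Ω × (Fin d → ℝ) => A j q.1 * C i q.2)
        (P.prod (Measure.pi fun _ : Fin d => gaussianReal 0 1)) :=
      (hIA j).mul_prod (hIC i)
    have h4 : Integrable (fun q : Ω × (Fin d → ℝ) =>
          (1:ℝ) * (∑ k, ∑ l, (S i k * S j l) * (q.2 k * q.2 l)))
        (P.prod (Measure.pi fun _ : Fin d => gaussianReal 0 1)) :=
      (integrable_const 1).mul_prod hICC
    have h12 : Integrable (fun q : Ω × (Fin d → ℝ) =>
          (A i q.1 * A j q.1) * 1 + A i q.1 * C j q.2)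
        (P.prod (Measure.pi fun _ : Fin d => gaussianReal 0 1)) := h1.add h2
    have h123 : Integrable (fun q : Ω × (Fin d → ℝ) =>
          (A i q.1 * A j q.1) * 1 + A i q.1 * C j q.2 + A j q.1 * C i q.2)
        (P.prod (Measure.pi fun _ : Fin d => gaussianReal 0 1)) := h12.add h3
    rw [integral_congr_ae (Filter.Eventually.of_forall hpt)]
    rw [integral_add h123 h4, integral_add h12 h3, integral_add h1 h2,
      integral_prod_mul (f := fun ω : Ω => A i ω * A j ω) (g := fun _ : Fin d → ℝ => (1:ℝ)),
      integral_prod_mul (f := A i) (g := C j), integral_prod_mul (f := A j) (g := C i),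
      integral_prod_mul (f := fun _ : Ω => (1:ℝ))
        (g := fun z : Fin d → ℝ => ∑ k, ∑ l, (S i k * S j l) * (z k * z l))]
  rw [hsplit2, hEC i, hEC j, hECC, hEA2]
  simp only [integral_const, measure_univ, ENNReal.toReal_one, probReal_univ, smul_eq_mul, one_mul, mul_one,
    mul_zero, add_zero]
  -- sum over k of S i k * S j k
  have hSS : ∑ k, S i k * S j k
      = (if i = j then (1:ℝ) else 0) - (2 * s - s * s)/d * (v i * v j) := by
    have h1 : ∀ k, S i k * S j k = (if i = k then (if j = k then (1:ℝ) else 0) else 0)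
        - (if i = k then (s/d * (v j * v k)) else 0) - (if j = k then (s/d * (v i * v k)) else 0)
        + ((s/d) * (s/d) * (v i * v j)) * (v k * v k) := by
      intro k
      rw [hSe i k, hSe j k]
      by_cases h1 : i = k <;> by_cases h2 : j = k <;> simp [h1, h2] <;> try ring
    rw [Finset.sum_congr rfl fun k _ => h1 k]
    rw [Finset.sum_add_distrib, Finset.sum_sub_distrib, Finset.sum_sub_distrib,
      Finset.sum_ite_eq, Finset.sum_ite_eq, Finset.sum_ite_eq, ← Finset.mul_sum, hvv]
    simp only [Finset.mem_univ, if_true]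
    by_cases hij : i = j
    · subst hij
      simp only [if_pos rfl]
      field_simp
      try ring
    · rw [if_neg hij, if_neg (fun h => hij h.symm)]
      field_simp
      try ring
  rw [hSS]
  -- right-hand side
  have hR1 : ∑ k, (u i * v k) * S k j = u i * ((1 - s) * v j) := by
    have : ∀ k, (u i * v k) * S k j = u i * (v k * S k j) := fun k => by ring
    rw [Finset.sum_congr rfl fun k _ => this k, ← Finset.mul_sum, hvS j]
  have hR2 : ∑ k, S i k * (v k * u j) = ((1 - s) * v i) * u j := by
    have : ∀ k, S i k * (v k * u j) = (S i k * v k) * u j := fun k => by ring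
    rw [Finset.sum_congr rfl fun k _ => this k, ← Finset.sum_mul, hSv i]
  have hRHS : ((1 : Matrix (Fin d) (Fin d) ℝ)
      + (L2 / d) • vecMulVec u u
      + (L11 / d) • (vecMulVec u v * S + S * vecMulVec v u)) i j
      = (if i = j then (1:ℝ) else 0) + L2/d * (u i * u j)
        + L11/d * (u i * ((1 - s) * v j) + ((1 - s) * v i) * u j) := by
    simp only [Matrix.add_apply, Matrix.smul_apply, Matrix.one_apply, smul_eq_mul,
      Matrix.mul_apply, vecMulVec_apply]
    rw [hR1, hR2]
  rw [hRHS]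
  -- final scalar identity
  have hkey : m * (1 - s) * (1 - s) = 2 * s - s * s := by
    rw [hs_def]
    exact SC_key_s hm0
  linear_combination ((v i * v j) / d) * hkey
end

section
/- Consider the planar ODE system ṁ_u = -C₂ m_u + R_u(m_u, m_v), ṁ_v = -C₃ m_u² + R_v(m_u, m_v) with C₂ < 0, C₃ < 0, where |R_u| ≤ a₁ m_u² + a₂ m_v² and |R_v| ≤ b₁|m_u|³ + b₂|m_v|³ on [-δ̃, δ̃]². For any Γ > 0 there exists ε > 0 such that: if (m_u(0), m_v(0)) lies in A = {0 < m_u < ε, |m_v| < Γ m_u}, then the first exit time T from A satisfies (2/(3|C₂|))·log(ε/m_u(0)) ≤ T ≤ (2/|C₂|)·log(ε/m_u(0)), the exit occurs with m_u(T) = ε, and m_v(T) ≥ m_v(0) + (|C₃|/(6|C₂|))·(ε² - m_u(0)²). -/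
open Real

private lemma mono_of_deriv' {g g' : ℝ → ℝ} {a b : ℝ} (hab : a ≤ b)
    (hg : ∀ t, HasDerivAt g (g' t) t)
    (h : ∀ t ∈ Set.Ioo a b, 0 ≤ g' t) : g a ≤ g b := by
  have hcont : Continuous g := by
    rw [continuous_iff_continuousAt]; exact fun t => (hg t).continuousAt
  have hm : MonotoneOn g (Set.Icc a b) :=
    monotoneOn_of_deriv_nonneg (convex_Icc a b) hcont.continuousOn
      (fun x _ => (hg x).differentiableAt.differentiableWithinAt)
      (fun x hx => by
        rw [(hg x).deriv]
        exact h x (by rwa [interior_Icc] at hx))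
  exact hm ⟨le_rfl, hab⟩ ⟨hab, le_rfl⟩ hab

private lemma anti_of_deriv' {g g' : ℝ → ℝ} {a b : ℝ} (hab : a ≤ b)
    (hg : ∀ t, HasDerivAt g (g' t) t)
    (h : ∀ t ∈ Set.Ioo a b, g' t ≤ 0) : g b ≤ g a := by
  have h2 : -g a ≤ -g b :=
    mono_of_deriv' (g := fun t => -g t) (g' := fun t => -g' t) hab
      (fun t => (hg t).neg) (fun t ht => by simpa using h t ht)
  linarith

private lemma strict_of_deriv' {g g' : ℝ → ℝ} {a b : ℝ} (hab : a < b)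
    (hg : ∀ t, HasDerivAt g (g' t) t)
    (h : ∀ t ∈ Set.Ioo a b, 0 < g' t) : g a < g b := by
  have hcont : Continuous g := by
    rw [continuous_iff_continuousAt]; exact fun t => (hg t).continuousAt
  have hm : StrictMonoOn g (Set.Icc a b) :=
    strictMonoOn_of_deriv_pos (convex_Icc a b) hcont.continuousOn
      (fun x hx => by
        rw [(hg x).deriv]
        exact h x (by rwa [interior_Icc] at hx))
  exact hm ⟨le_rfl, hab.le⟩ ⟨hab.le, le_rfl⟩ hab

private lemma gronwall_lower' {f f' : ℝ → ℝ} {k b : ℝ} (hb : 0 ≤ b)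
    (hf : ∀ t, HasDerivAt f (f' t) t)
    (h : ∀ t ∈ Set.Ioo 0 b, k * f t ≤ f' t) :
    f 0 * Real.exp (k * b) ≤ f b := by
  have hg : ∀ t, HasDerivAt (fun t => f t * Real.exp (-(k * t)))
      (f' t * Real.exp (-(k * t)) + f t * (Real.exp (-(k * t)) * -k)) t := by
    intro t
    have h1 : HasDerivAt (fun t : ℝ => -(k * t)) (-k) t := by
      have h := ((hasDerivAt_id t).const_mul k).neg; simp at h; exact h
    exact (hf t).mul h1.exp
  have key : f 0 * Real.exp (-(k * 0)) ≤ f b * Real.exp (-(k * b)) :=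
    mono_of_deriv' hb hg (fun t ht => by
      have hexp := Real.exp_pos (-(k * t))
      nlinarith [mul_le_mul_of_nonneg_right (h t ht) hexp.le])
  simp only [mul_zero, neg_zero, Real.exp_zero, mul_one] at key
  rw [Real.exp_neg] at key
  have h2 : (0:ℝ) < Real.exp (k * b) := Real.exp_pos _
  calc f 0 * Real.exp (k * b) ≤ f b * (Real.exp (k * b))⁻¹ * Real.exp (k * b) :=
        mul_le_mul_of_nonneg_right key h2.le
    _ = f b := by field_simp

private lemma gronwall_upper' {f f' : ℝ → ℝ} {k b : ℝ} (hb : 0 ≤ b)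
    (hf : ∀ t, HasDerivAt f (f' t) t)
    (h : ∀ t ∈ Set.Ioo 0 b, f' t ≤ k * f t) :
    f b ≤ f 0 * Real.exp (k * b) := by
  have hg : ∀ t, HasDerivAt (fun t => f t * Real.exp (-(k * t)))
      (f' t * Real.exp (-(k * t)) + f t * (Real.exp (-(k * t)) * -k)) t := by
    intro t
    have h1 : HasDerivAt (fun t : ℝ => -(k * t)) (-k) t := by
      have h := ((hasDerivAt_id t).const_mul k).neg; simp at h; exact h
    exact (hf t).mul h1.exp
  have key : f b * Real.exp (-(k * b)) ≤ f 0 * Real.exp (-(k * 0)) :=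
    anti_of_deriv' hb hg (fun t ht => by
      have hexp := Real.exp_pos (-(k * t))
      nlinarith [mul_le_mul_of_nonneg_right (h t ht) hexp.le])
  simp only [mul_zero, neg_zero, Real.exp_zero, mul_one] at key
  rw [Real.exp_neg] at key
  have h2 : (0:ℝ) < Real.exp (k * b) := Real.exp_pos _
  calc f b = f b * (Real.exp (k * b))⁻¹ * Real.exp (k * b) := by field_simp
    _ ≤ f 0 * Real.exp (k * b) := mul_le_mul_of_nonneg_right key h2.le
/-- Exit-time analysis for the planar overlap dynamics
`ṁ_u = -C₂ m_u + R_u(m_u, m_v)`, `ṁ_v = -C₃ m_u² + R_v(m_u, m_v)` with `C₂ < 0`, `C₃ < 0`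
and remainder bounds `|R_u| ≤ a₁ m_u² + a₂ m_v²`, `|R_v| ≤ b₁|m_u|³ + b₂|m_v|³` on
`[-δ, δ]²`. For any `Γ > 0` there is `ε > 0` such that trajectories starting in
`A = {0 < m_u < ε, |m_v| < Γ m_u}` exit `A` at a time `T` with
`(2/(3|C₂|)) log(ε/m_u(0)) ≤ T ≤ (2/|C₂|) log(ε/m_u(0))`, the exit happens with
`m_u(T) = ε`, and `m_v(T) ≥ m_v(0) + (|C₃|/(6|C₂|)) (ε² - m_u(0)²)`. -/
theorem planar_ode_weak_recovery (C₂ C₃ a₁ a₂ b₁ b₂ δ Γ : ℝ)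
    (hC₂ : C₂ < 0) (hC₃ : C₃ < 0)
    (ha₁ : 0 < a₁) (ha₂ : 0 < a₂) (hb₁ : 0 < b₁) (hb₂ : 0 < b₂)
    (hδ : 0 < δ) (hΓ : 0 < Γ) :
    ∃ ε : ℝ, 0 < ε ∧
      ∀ (mu mv : ℝ → ℝ) (Ru Rv : ℝ → ℝ → ℝ),
        (∀ x y : ℝ, |x| ≤ δ → |y| ≤ δ → |Ru x y| ≤ a₁ * x ^ 2 + a₂ * y ^ 2) →
        (∀ x y : ℝ, |x| ≤ δ → |y| ≤ δ → |Rv x y| ≤ b₁ * |x| ^ 3 + b₂ * |y| ^ 3) →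
        (∀ t : ℝ, HasDerivAt mu (-C₂ * mu t + Ru (mu t) (mv t)) t) →
        (∀ t : ℝ, HasDerivAt mv (-C₃ * (mu t) ^ 2 + Rv (mu t) (mv t)) t) →
        0 < mu 0 → mu 0 < ε → |mv 0| < Γ * mu 0 →
        ∀ T : ℝ,
          T = sInf {t : ℝ | 0 ≤ t ∧ ¬ (0 < mu t ∧ mu t < ε ∧ |mv t| < Γ * mu t)} →
          2 / (3 * |C₂|) * Real.log (ε / mu 0) ≤ T ∧
          T ≤ 2 / |C₂| * Real.log (ε / mu 0) ∧
          mu T = ε ∧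
          mv 0 + |C₃| / (6 * |C₂|) * (ε ^ 2 - (mu 0) ^ 2) ≤ mv T := by
  have hc2 : (0:ℝ) < |C₂| := abs_pos.mpr hC₂.ne
  have hc3 : (0:ℝ) < |C₃| := abs_pos.mpr hC₃.ne
  have hC₂abs : |C₂| = -C₂ := abs_of_neg hC₂
  have hC₃abs : |C₃| = -C₃ := abs_of_neg hC₃
  have hK₁pos : 0 < a₁ + a₂ * Γ ^ 2 := by positivity
  have hK₂pos : 0 < b₁ + b₂ * Γ ^ 3 := by positivity
  obtain ⟨ε, hε0, e1, e2, e3, e4, e5⟩ :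
      ∃ ε : ℝ, 0 < ε ∧ ε ≤ δ ∧ ε * Γ ≤ δ ∧ ε * (2 * (a₁ + a₂ * Γ ^ 2)) ≤ |C₂| ∧
        ε * (2 * (b₁ + b₂ * Γ ^ 3)) ≤ |C₃| ∧ ε * (3 * |C₃|) ≤ Γ * |C₂| := by
    refine ⟨min δ (min (δ / Γ) (min (|C₂| / (2 * (a₁ + a₂ * Γ ^ 2)))
        (min (|C₃| / (2 * (b₁ + b₂ * Γ ^ 3))) (Γ * |C₂| / (3 * |C₃|))))),
      by positivity, min_le_left _ _, ?_, ?_, ?_, ?_⟩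
    · rw [← le_div_iff₀ hΓ]
      exact le_trans (min_le_right _ _) (min_le_left _ _)
    · rw [← le_div_iff₀ (by positivity)]
      exact le_trans (min_le_right _ _) (le_trans (min_le_right _ _) (min_le_left _ _))
    · rw [← le_div_iff₀ (by positivity)]
      exact le_trans (min_le_right _ _) (le_trans (min_le_right _ _)
        (le_trans (min_le_right _ _) (min_le_left _ _)))
    · rw [← le_div_iff₀ (by positivity)]
      exact le_trans (min_le_right _ _) (le_trans (min_le_right _ _)
        (le_trans (min_le_right _ _) (min_le_right _ _)))
  refine ⟨ε, hε0, ?_⟩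
  intro mu mv Ru Rv hRu hRv hdu hdv h0pos h0lt h0cone T hT
  obtain ⟨muD, hmuDdef⟩ : ∃ f : ℝ → ℝ, ∀ t, f t = -C₂ * mu t + Ru (mu t) (mv t) :=
    ⟨_, fun t => rfl⟩
  obtain ⟨mvD, hmvDdef⟩ : ∃ f : ℝ → ℝ, ∀ t, f t = -C₃ * (mu t) ^ 2 + Rv (mu t) (mv t) :=
    ⟨_, fun t => rfl⟩
  have hduD : ∀ t, HasDerivAt mu (muD t) t := fun t => (hmuDdef t) ▸ hdu t
  have hdvD : ∀ t, HasDerivAt mv (mvD t) t := fun t => (hmvDdef t) ▸ hdv t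
  have hmuc : Continuous mu := by
    rw [continuous_iff_continuousAt]; exact fun t => (hdu t).continuousAt
  have hmvc : Continuous mv := by
    rw [continuous_iff_continuousAt]; exact fun t => (hdv t).continuousAt
  -- derivative bounds inside A
  have hbounds : ∀ t : ℝ, 0 < mu t → mu t < ε → |mv t| < Γ * mu t →
      |C₂| / 2 * mu t ≤ muD t ∧ muD t ≤ 3 * |C₂| / 2 * mu t ∧
      |C₃| / 2 * (mu t) ^ 2 ≤ mvD t ∧ |mvD t| ≤ 3 * |C₃| / 2 * (mu t) ^ 2 := by
    intro t h1 h2 h3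
    have hmuδ : |mu t| ≤ δ := by
      rw [abs_of_pos h1]; linarith only [h2, e1]
    have hΓmu : Γ * mu t < Γ * ε := mul_lt_mul_of_pos_left h2 hΓ
    have hmvδ : |mv t| ≤ δ := by linarith only [h3, hΓmu, e2]
    have hRu' := hRu _ _ hmuδ hmvδ
    have hRv' := hRv _ _ hmuδ hmvδ
    have habs2 : (mv t) ^ 2 ≤ Γ ^ 2 * (mu t) ^ 2 := by
      have h := mul_self_le_mul_self (abs_nonneg (mv t)) h3.le
      have h' := sq_abs (mv t)
      nlinarith only [h, h']
    have habs3 : |mv t| ^ 3 ≤ Γ ^ 3 * (mu t) ^ 3 := by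
      have h := pow_le_pow_left₀ (abs_nonneg (mv t)) h3.le 3
      rwa [mul_pow] at h
    have hmu3 : |mu t| ^ 3 = (mu t) ^ 3 := by rw [abs_of_pos h1]
    have hRu2 : |Ru (mu t) (mv t)| ≤ |C₂| / 2 * mu t := by
      have h4 : a₁ * (mu t) ^ 2 + a₂ * (mv t) ^ 2 ≤ (a₁ + a₂ * Γ ^ 2) * (mu t) ^ 2 := by
        nlinarith only [mul_le_mul_of_nonneg_left habs2 ha₂.le]
      have h5 : (a₁ + a₂ * Γ ^ 2) * (mu t) ^ 2 ≤ (a₁ + a₂ * Γ ^ 2) * ε * mu t := by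
        nlinarith only [mul_le_mul_of_nonneg_left h2.le (mul_pos hK₁pos h1).le]
      have h6 : (a₁ + a₂ * Γ ^ 2) * ε * mu t ≤ |C₂| / 2 * mu t := by
        nlinarith only [mul_le_mul_of_nonneg_right e3 h1.le]
      linarith only [hRu', h4, h5, h6]
    have hRv2 : |Rv (mu t) (mv t)| ≤ |C₃| / 2 * (mu t) ^ 2 := by
      have h4 : b₁ * |mu t| ^ 3 + b₂ * |mv t| ^ 3 ≤ (b₁ + b₂ * Γ ^ 3) * (mu t) ^ 3 := by
        rw [hmu3]
        nlinarith only [mul_le_mul_of_nonneg_left habs3 hb₂.le]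
      have h5 : (b₁ + b₂ * Γ ^ 3) * (mu t) ^ 3 ≤ (b₁ + b₂ * Γ ^ 3) * ε * (mu t) ^ 2 := by
        nlinarith only [mul_le_mul_of_nonneg_left h2.le (mul_pos hK₂pos (pow_pos h1 2)).le]
      have h6 : (b₁ + b₂ * Γ ^ 3) * ε * (mu t) ^ 2 ≤ |C₃| / 2 * (mu t) ^ 2 := by
        nlinarith only [mul_le_mul_of_nonneg_right e4 (sq_nonneg (mu t))]
      linarith only [hRv', h4, h5, h6]
    have hRuab := abs_le.mp hRu2
    have hRvab := abs_le.mp hRv2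
    have hC2lin : -C₂ * mu t = |C₂| * mu t := by rw [hC₂abs]
    have hC3lin : -C₃ * (mu t) ^ 2 = |C₃| * (mu t) ^ 2 := by rw [hC₃abs]
    have hpos2 : 0 ≤ |C₃| * (mu t) ^ 2 := mul_nonneg hc3.le (sq_nonneg (mu t))
    have hpos1 : 0 ≤ |C₂| * mu t := mul_nonneg hc2.le h1.le
    rw [hmuDdef t, hmvDdef t]
    refine ⟨by linarith only [hRuab.1, hC2lin, hpos1],
      by linarith only [hRuab.2, hC2lin, hpos1],
      by linarith only [hRvab.1, hC3lin, hpos2], ?_⟩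
    rw [abs_le]
    exact ⟨by linarith only [hRvab.1, hC3lin, hpos2],
      by linarith only [hRvab.2, hC3lin, hpos2]⟩
  clear hRu hRv
  set S : Set ℝ := {t : ℝ | 0 ≤ t ∧ ¬ (0 < mu t ∧ mu t < ε ∧ |mv t| < Γ * mu t)} with hSdef
  have hSbdd : BddBelow S := ⟨0, fun s hs => hs.1⟩
  have hP : ∀ t, 0 ≤ t → t < T → (0 < mu t ∧ mu t < ε ∧ |mv t| < Γ * mu t) := by
    intro t ht0 htT
    by_contra h
    have : T ≤ t := hT ▸ csInf_le hSbdd ⟨ht0, h⟩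
    linarith
  have hL : 0 < Real.log (ε / mu 0) := Real.log_pos (by rw [lt_div_iff₀ h0pos]; linarith)
  -- S is nonempty
  have hSne : S.Nonempty := by
    by_contra h
    rw [Set.not_nonempty_iff_eq_empty, Set.eq_empty_iff_forall_notMem] at h
    have hall : ∀ t : ℝ, 0 ≤ t → (0 < mu t ∧ mu t < ε ∧ |mv t| < Γ * mu t) := by
      intro t ht; by_contra hc; exact h t ⟨ht, hc⟩
    obtain ⟨t₀, ht₀def⟩ : ∃ x : ℝ, x = 2 / |C₂| * Real.log (ε / mu 0) + 2 := ⟨_, rfl⟩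
    have ht₀0 : 0 ≤ t₀ := by
      have h9 : 0 < 2 / |C₂| * Real.log (ε / mu 0) := by positivity
      linarith only [h9, ht₀def.le, ht₀def.ge]
    have hgr : mu 0 * Real.exp (|C₂| / 2 * t₀) ≤ mu t₀ :=
      gronwall_lower' ht₀0 hduD (fun t ht => by
        obtain ⟨p1, p2, p3⟩ := hall t ht.1.le
        exact (hbounds t p1 p2 p3).1)
    have he : Real.exp (|C₂| / 2 * t₀) = ε / mu 0 * Real.exp |C₂| := by
      rw [ht₀def, show |C₂| / 2 * (2 / |C₂| * Real.log (ε / mu 0) + 2)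
          = Real.log (ε / mu 0) + |C₂| by field_simp]
      rw [Real.exp_add, Real.exp_log (by positivity)]
    have hE : 1 < Real.exp |C₂| := by
      calc (1:ℝ) = Real.exp 0 := Real.exp_zero.symm
        _ < Real.exp |C₂| := Real.exp_lt_exp.mpr hc2
    have heq : mu 0 * (ε / mu 0 * Real.exp |C₂|) = ε * Real.exp |C₂| := by
      field_simp
    rw [he, heq] at hgr
    have := (hall t₀ ht₀0).2.1
    linarith only [hgr, this, mul_pos (sub_pos.mpr hE) hε0]
  -- S is closed, so T ∈ S
  have hAopen : IsOpen {t : ℝ | 0 < mu t ∧ mu t < ε ∧ |mv t| < Γ * mu t} := by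
    have h1 : IsOpen {t : ℝ | 0 < mu t} := isOpen_lt continuous_const hmuc
    have h2 : IsOpen {t : ℝ | mu t < ε} := isOpen_lt hmuc continuous_const
    have h3 : IsOpen {t : ℝ | |mv t| < Γ * mu t} :=
      isOpen_lt hmvc.abs (continuous_const.mul hmuc)
    have : {t : ℝ | 0 < mu t ∧ mu t < ε ∧ |mv t| < Γ * mu t}
        = {t : ℝ | 0 < mu t} ∩ ({t : ℝ | mu t < ε} ∩ {t : ℝ | |mv t| < Γ * mu t}) := by
      ext t; simp [Set.mem_inter_iff, and_assoc]
    rw [this]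
    exact h1.inter (h2.inter h3)
  have hSclosed : IsClosed S := by
    have : S = Set.Ici (0:ℝ) ∩ {t : ℝ | 0 < mu t ∧ mu t < ε ∧ |mv t| < Γ * mu t}ᶜ := by
      ext t; simp [hSdef, Set.mem_Ici, Set.mem_inter_iff, Set.mem_compl_iff]
    rw [this]
    exact isClosed_Ici.inter hAopen.isClosed_compl
  have hTmem : T ∈ S := hT ▸ hSclosed.csInf_mem hSne hSbdd
  have hT0 : 0 ≤ T := hTmem.1
  have hTne : T ≠ 0 := by
    intro h
    exact hTmem.2 (by rw [h]; exact ⟨h0pos, h0lt, h0cone⟩)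
  have hTpos : 0 < T := hT0.lt_of_ne (Ne.symm hTne)
  have hPm : ∀ t ∈ Set.Ioo (0:ℝ) T, 0 < mu t ∧ mu t < ε ∧ |mv t| < Γ * mu t :=
    fun t ht => hP t ht.1.le ht.2
  -- mu T ≤ ε by continuity from the left
  have hmuTle : mu T ≤ ε := by
    have htd : Filter.Tendsto mu (nhdsWithin T (Set.Iio T)) (nhds (mu T)) :=
      (hmuc.tendsto T).mono_left nhdsWithin_le_nhds
    refine le_of_tendsto htd ?_
    filter_upwards [Ioo_mem_nhdsLT_of_mem
      (show T ∈ Set.Ioc (0:ℝ) T from ⟨hTpos, le_refl T⟩)] with t ht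
    exact (hPm t ht).2.1.le
  -- mu is strictly increasing up to T
  have hmuTpos : 0 < mu T := by
    have : mu 0 < mu T :=
      strict_of_deriv' hTpos hduD (fun t ht => by
        obtain ⟨p1, p2, p3⟩ := hPm t ht
        have := (hbounds t p1 p2 p3).1
        linarith only [this, mul_pos hc2 p1])
    linarith
  -- cone condition persists at T
  have hq1 : Γ * mu 0 - mv 0 ≤ Γ * mu T - mv T := by
    refine mono_of_deriv' (g := fun t => Γ * mu t - mv t)
      (g' := fun t => Γ * muD t - mvD t) hT0
      (fun t => ((hduD t).const_mul Γ).sub (hdvD t)) ?_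
    intro t ht
    obtain ⟨p1, p2, p3⟩ := hPm t ht
    obtain ⟨q1, _, _, q4⟩ := hbounds t p1 p2 p3
    have q5 := (abs_le.mp q4).2
    have hB1 : 3 * |C₃| * mu t ≤ Γ * |C₂| := by
      linarith only [mul_le_mul_of_nonneg_left p2.le (by positivity : (0:ℝ) ≤ 3 * |C₃|), e5]
    have hB := mul_le_mul_of_nonneg_right hB1 p1.le
    show 0 ≤ Γ * muD t - mvD t
    nlinarith only [mul_le_mul_of_nonneg_left q1 hΓ.le, q5, hB]
  have hq2 : Γ * mu 0 + mv 0 ≤ Γ * mu T + mv T := by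
    refine mono_of_deriv' (g := fun t => Γ * mu t + mv t)
      (g' := fun t => Γ * muD t + mvD t) hT0
      (fun t => ((hduD t).const_mul Γ).add (hdvD t)) ?_
    intro t ht
    obtain ⟨p1, p2, p3⟩ := hPm t ht
    obtain ⟨q1, _, _, q4⟩ := hbounds t p1 p2 p3
    have q5 := (abs_le.mp q4).1
    have hB1 : 3 * |C₃| * mu t ≤ Γ * |C₂| := by
      linarith only [mul_le_mul_of_nonneg_left p2.le (by positivity : (0:ℝ) ≤ 3 * |C₃|), e5]
    have hB := mul_le_mul_of_nonneg_right hB1 p1.le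
    show 0 ≤ Γ * muD t + mvD t
    nlinarith only [mul_le_mul_of_nonneg_left q1 hΓ.le, q5, hB]
  have hconeT : |mv T| < Γ * mu T := by
    have h0c := abs_lt.mp h0cone
    rw [abs_lt]
    constructor <;> linarith
  have hmuT : mu T = ε := by
    refine le_antisymm hmuTle ?_
    by_contra h
    push_neg at h
    exact hTmem.2 ⟨hmuTpos, h, hconeT⟩
  -- exponential comparison on [0, T]
  have hgl : mu 0 * Real.exp (|C₂| / 2 * T) ≤ mu T :=
    gronwall_lower' hT0 hduD (fun t ht => by
      obtain ⟨p1, p2, p3⟩ := hPm t ht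
      exact (hbounds t p1 p2 p3).1)
  have hgu : mu T ≤ mu 0 * Real.exp (3 * |C₂| / 2 * T) :=
    gronwall_upper' hT0 hduD (fun t ht => by
      obtain ⟨p1, p2, p3⟩ := hPm t ht
      exact (hbounds t p1 p2 p3).2.1)
  rw [hmuT] at hgl hgu
  have hbound1 : 2 / (3 * |C₂|) * Real.log (ε / mu 0) ≤ T := by
    have h7 : Real.log (ε / mu 0) ≤ 3 * |C₂| / 2 * T := by
      rw [Real.log_le_iff_le_exp (by positivity)]
      calc ε / mu 0 ≤ Real.exp (3 * |C₂| / 2 * T) := by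
            rw [div_le_iff₀ h0pos]; linarith [hgu]
        _ = Real.exp (3 * |C₂| / 2 * T) := rfl
    rw [div_mul_eq_mul_div, div_le_iff₀ (by positivity)]
    linarith
  have hbound2 : T ≤ 2 / |C₂| * Real.log (ε / mu 0) := by
    have h7 : |C₂| / 2 * T ≤ Real.log (ε / mu 0) := by
      rw [Real.le_log_iff_exp_le (by positivity)]
      rw [le_div_iff₀ h0pos]
      linarith [hgl]
    rw [div_mul_eq_mul_div, le_div_iff₀ hc2]
    linarith
  -- mv estimate
  have hmv : mv 0 - |C₃| / (6 * |C₂|) * (mu 0) ^ 2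
      ≤ mv T - |C₃| / (6 * |C₂|) * (mu T) ^ 2 := by
    refine mono_of_deriv' (g := fun t => mv t - |C₃| / (6 * |C₂|) * (mu t) ^ 2)
      (g' := fun t => mvD t - |C₃| / (6 * |C₂|) * (2 * mu t * muD t)) hT0
      (fun t => ?_) ?_
    · have h1 := ((hduD t).pow 2).const_mul (|C₃| / (6 * |C₂|))
      have h2 := (hdvD t).sub h1
      simp at h2; exact h2
    · intro t ht
      obtain ⟨p1, p2, p3⟩ := hPm t ht
      obtain ⟨_, q2, q3, _⟩ := hbounds t p1 p2 p3
      have hcnn : (0:ℝ) ≤ |C₃| / (6 * |C₂|) * (2 * mu t) := by positivity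
      have hmul := mul_le_mul_of_nonneg_left q2 hcnn
      have hcid : |C₃| / (6 * |C₂|) * (2 * mu t) * (3 * |C₂| / 2 * mu t)
          = |C₃| / 2 * (mu t) ^ 2 := by field_simp; ring
      rw [hcid] at hmul
      show 0 ≤ mvD t - |C₃| / (6 * |C₂|) * (2 * mu t * muD t)
      linarith only [q3, hmul]
  rw [hmuT] at hmv
  exact ⟨hbound1, hbound2, hmuT, by linarith⟩
end
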